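/- Let B, C be m×m matrices over a differential ring (R,δ). Define for each n the (n+1)×(n+1) block lower-triangular matrix Φ_n(B) with (i,j)-block (i choose j)·B⁽ⁱ⁻ʲ⁾. Then Φ_n(BC) = Φ_n(B)·Φ_n(C), i.e., Φ_n is multiplicative. -/

import Mathlib

/-!
The `(i, j)`-block of `Φ_n(B) Φ_n(C)` is `∑_{j ≤ k ≤ i} (i choose k) (k choose j) • B⁽ⁱ⁻ᵏ⁾ C⁽ᵏ⁻ʲ⁾`. Since
`(i choose k) (k choose j) = (i choose j) ((i - j) choose (k - j))`, this is `(i choose j)` times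
the general Leibniz expansion of `(BC)⁽ⁱ⁻ʲ⁾`, which holds for the entrywise derivative because it
satisfies the product rule on (noncommutative) matrices.
-/

open Finset

section Leibniz

variable {A : Type*} [NonUnitalNonAssocSemiring A] (D : A →+ A)
  (hD : ∀ a b, D (a * b) = D a * b + a * D b)
include hD

theorem AddMonoidHom.iterate_map_mul_eq_sum_antidiagonal (n : ℕ) (a b : A) :
    D^[n] (a * b) = ∑ ij ∈ antidiagonal n, n.choose ij.1 • (D^[ij.1] a * D^[ij.2] b) := by
  induction n with
  | zero => simp
  | succ n ih =>
    rw [sum_antidiagonal_choose_succ_nsmul (fun i j => D^[i] a * D^[j] b) n]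
    simp only [Function.iterate_succ_apply', ih, map_sum, map_nsmul, hD, smul_add,
      sum_add_distrib]
    rw [add_comm]
    congr 1
    refine sum_congr rfl fun ⟨i, j⟩ hij => ?_
    rw [n.choose_symm_of_eq_add (mem_antidiagonal.1 hij).symm]

theorem AddMonoidHom.iterate_map_mul_eq_sum_range (n : ℕ) (a b : A) :
    D^[n] (a * b) = ∑ k ∈ Finset.range (n + 1), n.choose k • (D^[n - k] a * D^[k] b) := by
  rw [D.iterate_map_mul_eq_sum_antidiagonal hD, ← Nat.sum_antidiagonal_swap,
    Nat.sum_antidiagonal_eq_sum_range_succ_mk]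
  refine sum_congr rfl fun k hk => ?_
  dsimp only [Prod.swap_prod_mk]
  rw [Nat.choose_symm (Nat.lt_succ_iff.1 (Finset.mem_range.1 hk))]

end Leibniz

theorem Derivation.matrix_map_mul {S R ι : Type*} [CommSemiring S] [CommSemiring R] [Algebra S R]
    [Fintype ι] (δ : Derivation S R R) (M N : Matrix ι ι R) :
    (M * N).map δ = M.map δ * N + M * N.map δ := by
  ext a b
  simp only [Matrix.map_apply, Matrix.mul_apply, Matrix.add_apply, map_sum, Derivation.leibniz,
    smul_eq_mul, sum_add_distrib]
  rw [add_comm]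
  congr 1
  exact sum_congr rfl fun s _ => mul_comm _ _

def binomialBlockMatrix {ι R : Type*} [AddMonoid R] (D : Matrix ι ι R → Matrix ι ι R) (n : ℕ)
    (M : Matrix ι ι R) : Matrix (Fin (n + 1) × ι) (Fin (n + 1) × ι) R := fun p q =>
  if (q.1 : ℕ) ≤ (p.1 : ℕ) then
    ((p.1 : ℕ).choose (q.1 : ℕ)) • (D^[(p.1 : ℕ) - (q.1 : ℕ)] M) p.2 q.2
  else 0

theorem binomialBlockMatrix_mul_apply {ι R : Type*} [Fintype ι] [NonUnitalNonAssocSemiring R]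
    (D : Matrix ι ι R → Matrix ι ι R) (n : ℕ) (B C : Matrix ι ι R) (i j : Fin (n + 1)) (a b : ι) :
    (binomialBlockMatrix D n B * binomialBlockMatrix D n C) (i, a) (j, b) =
      ∑ k ∈ Icc (j : ℕ) i, ((i : ℕ).choose k * k.choose j) • (D^[i - k] B * D^[k - j] C) a b := by
  have block (k : ℕ) :
      ∑ s, (if k ≤ i then (i : ℕ).choose k • (D^[i - k] B) a s else 0) *
          (if (j : ℕ) ≤ k then k.choose j • (D^[k - j] C) s b else 0) =
        if k ∈ Icc (j : ℕ) i then ((i : ℕ).choose k * k.choose j) • (D^[i - k] B * D^[k - j] C) a b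
        else 0 := by
    by_cases hki : k ≤ i <;> by_cases hjk : (j : ℕ) ≤ k <;>
      simp [hki, hjk, Matrix.mul_apply, smul_sum, smul_mul_smul_comm]
  have hIcc : Icc (j : ℕ) i ⊆ range (n + 1) := fun k hk => by
    simp only [mem_Icc, mem_range] at hk ⊢; omega
  rw [Matrix.mul_apply, Fintype.sum_prod_type]
  simp only [binomialBlockMatrix, block]
  rw [Fin.sum_univ_eq_sum_range (fun k => if k ∈ Icc (j : ℕ) i then
      ((i : ℕ).choose k * k.choose j) • (D^[i - k] B * D^[k - j] C) a b else 0), sum_ite_mem,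
    inter_eq_right.2 hIcc]

theorem binomialBlockMatrix_mul {ι R : Type*} [Fintype ι] [NonUnitalNonAssocSemiring R]
    (D : Matrix ι ι R →+ Matrix ι ι R) (hD : ∀ M N, D (M * N) = D M * N + M * D N) (n : ℕ)
    (B C : Matrix ι ι R) :
    binomialBlockMatrix D n (B * C) = binomialBlockMatrix D n B * binomialBlockMatrix D n C := by
  ext ⟨i, a⟩ ⟨j, b⟩
  rw [binomialBlockMatrix_mul_apply, binomialBlockMatrix]
  split_ifs with hji
  · rw [D.iterate_map_mul_eq_sum_range hD, ← Ico_add_one_right_eq_Icc, sum_Ico_eq_sum_range,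
      Matrix.sum_apply, smul_sum, Nat.sub_add_comm hji]
    refine sum_congr rfl fun t _ => ?_
    rw [Nat.choose_mul (Nat.le_add_right _ _), Matrix.smul_apply, smul_smul,
      Nat.add_sub_cancel_left, Nat.sub_add_eq]
  · rw [Icc_eq_empty (by omega), sum_empty]

/-- For `m×m` matrices `B, C` over a differential ring `(R, δ)`, the map
`Φ_n` sending `M` to the `(n+1)×(n+1)` block lower-triangular matrix with `(i,j)`-block
`(i choose j)·M⁽ⁱ⁻ʲ⁾` is multiplicative: `Φ_n(BC) = Φ_n(B)·Φ_n(C)`. -/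
theorem stmt6 {R : Type*} [CommRing R] (δ : Derivation ℤ R R)
    {m : ℕ} (B C : Matrix (Fin m) (Fin m) R) (n : ℕ) :
    letI d : Matrix (Fin m) (Fin m) R → Matrix (Fin m) (Fin m) R := fun M => M.map δ
    letI Φ : Matrix (Fin m) (Fin m) R →
        Matrix (Fin (n + 1) × Fin m) (Fin (n + 1) × Fin m) R := fun M p q =>
      if (q.1 : ℕ) ≤ (p.1 : ℕ) then
        ((p.1 : ℕ).choose (q.1 : ℕ)) • (d^[(p.1 : ℕ) - (q.1 : ℕ)] M) p.2 q.2
      else 0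
    Φ (B * C) = Φ B * Φ C :=
  binomialBlockMatrix_mul δ.toAddMonoidHom.mapMatrix (Derivation.matrix_map_mul δ) n B C
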